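/- arXiv:math/0607667 — 2 statements merged into one kernel-verified Lean document; each statement's English description precedes it below -/
import Mathlib

section
/- For fixed t > 0 and x, y ∈ ℝ³ \ {0}, the map α ↦ p_t^α(x,y) is (weakly) decreasing on ℝ. -/
/-!
Only the last term of `pA α t x y` depends on `α`, through `a * ∫₀^∞ e^{-au} g(u) du` with
`a = 4πα` and `g(u) = p_t(u + |x| + |y|)`. Integrating by parts,
`a * ∫₀^∞ e^{-au} g = g(0) + ∫₀^∞ e^{-au} g'`, and since `g' ≤ 0` on `(0, ∞)` the integrand
`e^{-au} g'(u)` increases with `a`. All integrals converge for every real `a`, negative ones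
included, because completing the square makes `e^{-au} p_t(u + c)` a constant multiple of
`p_t(u + c + 2ta)`.
-/

open Real MeasureTheory

noncomputable def pt (t r : ℝ) : ℝ := (4 * π * t) ^ (-(3 : ℝ) / 2) * Real.exp (-r ^ 2 / (4 * t))

noncomputable def pA (α t : ℝ) (x y : EuclideanSpace ℝ (Fin 3)) : ℝ :=
  (4 * π * t) ^ (-(3 : ℝ) / 2) * Real.exp (-‖y - x‖ ^ 2 / (4 * t)) +
    (2 * t / (‖x‖ * ‖y‖)) * pt t (‖x‖ + ‖y‖) -
    (8 * π * α * t / (‖x‖ * ‖y‖)) *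
      ∫ u in Set.Ioi (0 : ℝ), Real.exp (-(4 * π * α * u)) * pt t (u + ‖x‖ + ‖y‖)

open Set

section Laplace

variable {g g' : ℝ → ℝ}

theorem mul_integral_exp_neg_mul_Ioi {a : ℝ} (hg : ∀ u ∈ Ici (0 : ℝ), HasDerivAt g (g' u) u)
    (hint : IntegrableOn (fun u => exp (-(a * u)) * g u) (Ioi 0))
    (hint' : IntegrableOn (fun u => exp (-(a * u)) * g' u) (Ioi 0)) :
    a * ∫ u in Ioi (0 : ℝ), exp (-(a * u)) * g u
      = g 0 + ∫ u in Ioi (0 : ℝ), exp (-(a * u)) * g' u := by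
  have hderiv : ∀ u ∈ Ici (0 : ℝ), HasDerivAt (fun u => exp (-(a * u)) * g u)
      (-a * (exp (-(a * u)) * g u) + exp (-(a * u)) * g' u) u := fun u hu => by
    have hexp : HasDerivAt (fun u => exp (-(a * u))) (exp (-(a * u)) * -a) u := by
      simpa using ((hasDerivAt_id u).const_mul a).neg.exp
    exact (hexp.fun_mul (hg u hu)).congr_deriv (by ring)
  have hint_deriv := (hint.const_mul (-a)).add hint'
  have hdecay := tendsto_zero_of_hasDerivAt_of_integrableOn_Ioi
    (fun u hu => hderiv u (mem_Ici_of_Ioi hu)) hint_deriv hint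
  have hFTC := integral_Ioi_of_hasDerivAt_of_tendsto' hderiv hint_deriv hdecay
  rw [integral_add (hint.const_mul (-a)) hint', integral_const_mul] at hFTC
  simp only [mul_zero, neg_zero, exp_zero, one_mul] at hFTC
  linarith

theorem monotone_mul_integral_exp_neg_mul_Ioi (hg : ∀ u ∈ Ici (0 : ℝ), HasDerivAt g (g' u) u)
    (hg'_nonpos : ∀ u ∈ Ioi (0 : ℝ), g' u ≤ 0)
    (hint : ∀ a, IntegrableOn (fun u => exp (-(a * u)) * g u) (Ioi 0))
    (hint' : ∀ a, IntegrableOn (fun u => exp (-(a * u)) * g' u) (Ioi 0)) :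
    Monotone fun a => a * ∫ u in Ioi (0 : ℝ), exp (-(a * u)) * g u := by
  intro a b hab
  simp only [mul_integral_exp_neg_mul_Ioi hg (hint _) (hint' _)]
  gcongr g 0 + ?_
  refine setIntegral_mono_on (hint' a) (hint' b) measurableSet_Ioi fun u hu => ?_
  refine mul_le_mul_of_nonpos_right (exp_le_exp.mpr ?_) (hg'_nonpos u hu)
  have hu : 0 < u := hu
  nlinarith

end Laplace

section Heat

variable {t : ℝ}

theorem hasDerivAt_pt (r : ℝ) : HasDerivAt (pt t) (-(r / (2 * t)) * pt t r) r := by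
  have hexp : HasDerivAt (fun r => exp (-r ^ 2 / (4 * t)))
      (exp (-r ^ 2 / (4 * t)) * (-(2 * r) / (4 * t))) r := by
    simpa using (((hasDerivAt_id r).pow 2).neg.div_const (4 * t)).exp
  refine (hexp.const_mul ((4 * π * t) ^ (-(3 : ℝ) / 2))).congr_deriv ?_
  unfold pt
  by_cases ht : t = 0
  · simp [ht]
  · field_simp
    ring

theorem pt_eq_exp_neg_mul_sq (t r : ℝ) :
    pt t r = (4 * π * t) ^ (-(3 : ℝ) / 2) * exp (-(1 / (4 * t)) * r ^ 2) := by
  unfold pt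
  congr 2
  ring

theorem integrable_pt (ht : 0 < t) : Integrable (pt t) := by
  rw [funext (pt_eq_exp_neg_mul_sq t)]
  exact (integrable_exp_neg_mul_sq (by positivity)).const_mul _

theorem integrable_mul_pt (ht : 0 < t) : Integrable fun r => r * pt t r := by
  simp_rw [pt_eq_exp_neg_mul_sq, mul_left_comm _ ((4 * π * t) ^ (-(3 : ℝ) / 2))]
  exact (integrable_mul_exp_neg_mul_sq (by positivity)).const_mul _

theorem exp_neg_mul_mul_pt_add (ht : t ≠ 0) (a c u : ℝ) :
    exp (-(a * u)) * pt t (u + c)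
      = exp (((c + 2 * t * a) ^ 2 - c ^ 2) / (4 * t)) * pt t (u + (c + 2 * t * a)) := by
  unfold pt
  rw [mul_left_comm, ← exp_add, mul_left_comm, ← exp_add]
  congr 2
  field_simp
  ring

theorem integrable_exp_neg_mul_mul_pt_add (ht : 0 < t) (a c : ℝ) :
    Integrable fun u => exp (-(a * u)) * pt t (u + c) := by
  simp_rw [exp_neg_mul_mul_pt_add ht.ne']
  exact ((integrable_pt ht).comp_add_right _).const_mul _

theorem integrable_mul_exp_neg_mul_mul_pt_add (ht : 0 < t) (a c : ℝ) :
    Integrable fun u => u * (exp (-(a * u)) * pt t (u + c)) := by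
  set s := c + 2 * t * a
  have hshift : Integrable fun u => (u + s) * pt t (u + s) - s * pt t (u + s) :=
    ((integrable_mul_pt ht).comp_add_right s).sub (((integrable_pt ht).comp_add_right s).const_mul s)
  refine (hshift.const_mul (exp ((s ^ 2 - c ^ 2) / (4 * t)))).congr (.of_forall fun u => ?_)
  dsimp only
  rw [exp_neg_mul_mul_pt_add ht.ne']
  ring

theorem monotone_mul_integral_exp_neg_mul_pt_add (ht : 0 < t) {c : ℝ} (hc : 0 ≤ c) :
    Monotone fun a => a * ∫ u in Ioi (0 : ℝ), exp (-(a * u)) * pt t (u + c) := by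
  set g' := fun u => -((u + c) / (2 * t)) * pt t (u + c)
  have hg : ∀ u ∈ Ici (0 : ℝ), HasDerivAt (fun u => pt t (u + c)) (g' u) u := fun u _ =>
    (hasDerivAt_pt (u + c)).comp_add_const
  have hg'_nonpos : ∀ u ∈ Ioi (0 : ℝ), g' u ≤ 0 := fun u (hu : 0 < u) => by
    have : 0 ≤ pt t (u + c) := by unfold pt; positivity
    simp only [g', neg_mul, neg_nonpos]
    positivity
  have hint' : ∀ a, Integrable fun u => exp (-(a * u)) * g' u := fun a => by
    refine (((integrable_mul_exp_neg_mul_mul_pt_add ht a c).add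
      ((integrable_exp_neg_mul_mul_pt_add ht a c).const_mul c)).const_mul (-(1 / (2 * t)))).congr
      (.of_forall fun u => ?_)
    simp only [g', Pi.add_apply]
    ring
  exact monotone_mul_integral_exp_neg_mul_Ioi hg hg'_nonpos
    (fun a => (integrable_exp_neg_mul_mul_pt_add ht a c).integrableOn)
    (fun a => (hint' a).integrableOn)

end Heat

theorem pA_antitone_general (t : ℝ) (ht : 0 < t)
    (x y : EuclideanSpace ℝ (Fin 3)) :
    Antitone (fun α : ℝ => pA α t x y) := by
  set c := ‖x‖ + ‖y‖
  have hpA : ∀ α, pA α t x y = pA 0 t x y - 2 * t / (‖x‖ * ‖y‖) *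
      (4 * π * α * ∫ u in Ioi (0 : ℝ), exp (-(4 * π * α * u)) * pt t (u + c)) := fun α => by
    simp only [pA, c, add_assoc]
    ring
  intro α β hαβ
  have hL := monotone_mul_integral_exp_neg_mul_pt_add ht (by positivity : 0 ≤ c)
    (show 4 * π * α ≤ 4 * π * β by gcongr)
  simp only [hpA α, hpA β]
  gcongr

/-- `α ↦ p_t^α(x,y)` is weakly decreasing on `ℝ`. -/
theorem pA_antitone (t : ℝ) (ht : 0 < t)
    (x y : EuclideanSpace ℝ (Fin 3)) (hx : x ≠ 0) (hy : y ≠ 0) :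
    Antitone (fun α : ℝ => pA α t x y) :=
  pA_antitone_general t ht x y
end

section
/- For fixed t > 0 and x, y ∈ ℝ³ \ {0}, p_t^α(x,y) tends to +∞ as α → −∞. -/
open Real MeasureTheory Filter

/-!
For `α ≤ 0` the weight `exp (-4παu)` is at least `1` on `u > 0`, so the integral in the third
term of `p_t^α` is bounded below by the positive constant `∫_{u>0} p_t(u + |x| + |y|) du`.
Hence `p_t^α(x,y) ≥ p_t^0(x,y) + |α| · C` with `C > 0`, which tends to `+∞`.
-/

lemma pt_pos {t : ℝ} (ht : 0 < t) (r : ℝ) : 0 < pt t r := by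
  unfold pt
  have : 0 < 4 * π * t := by positivity
  positivity

/-- Completing the square: `exp (a u) p_t(u + c)` is a shifted and rescaled Gaussian. -/
lemma integrable_exp_mul_pt {t : ℝ} (ht : 0 < t) (a c : ℝ) :
    Integrable (fun u => Real.exp (a * u) * pt t (u + c)) := by
  set c' := c - 2 * t * a
  have hgauss : Integrable (fun u : ℝ => (4 * π * t) ^ (-(3 : ℝ) / 2) *
      Real.exp ((c' ^ 2 - c ^ 2) / (4 * t)) * Real.exp (-(1 / (4 * t)) * (u + c') ^ 2)) :=
    ((integrable_exp_neg_mul_sq (by positivity)).comp_add_right c').const_mul _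
  refine hgauss.congr (Eventually.of_forall fun u => ?_)
  simp only [pt]
  rw [mul_left_comm, mul_assoc, ← Real.exp_add, ← Real.exp_add]
  congr 2
  field_simp
  ring

lemma integral_Ioi_pt_pos {t : ℝ} (ht : 0 < t) (c : ℝ) :
    0 < ∫ u in Set.Ioi (0 : ℝ), pt t (u + c) := by
  have hint : IntegrableOn (fun u => pt t (u + c)) (Set.Ioi 0) := by
    simpa using (integrable_exp_mul_pt ht 0 c).integrableOn
  rw [setIntegral_pos_iff_support_of_nonneg_ae
    (Eventually.of_forall fun u => (pt_pos ht (u + c)).le) hint]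
  have hsupp : Function.support (fun u => pt t (u + c)) = Set.univ :=
    Function.support_eq_univ fun u => (pt_pos ht (u + c)).ne'
  simp [hsupp]

lemma integral_Ioi_pt_le_integral_exp_mul_pt {t a : ℝ} (ht : 0 < t) (ha : 0 ≤ a) (c : ℝ) :
    ∫ u in Set.Ioi (0 : ℝ), pt t (u + c) ≤
      ∫ u in Set.Ioi (0 : ℝ), Real.exp (a * u) * pt t (u + c) := by
  refine setIntegral_mono_on (by simpa using (integrable_exp_mul_pt ht 0 c).integrableOn)
    (integrable_exp_mul_pt ht a c).integrableOn measurableSet_Ioi fun u hu => ?_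
  have hexp : 1 ≤ Real.exp (a * u) := Real.one_le_exp (mul_nonneg ha hu.le)
  nlinarith [pt_pos ht (u + c)]

lemma pA_zero_add_le_pA {α t : ℝ} (ht : 0 < t) (hα : α ≤ 0) (x y : EuclideanSpace ℝ (Fin 3)) :
    pA 0 t x y + -α * (8 * π * t / (‖x‖ * ‖y‖) *
      ∫ u in Set.Ioi (0 : ℝ), pt t (u + (‖x‖ + ‖y‖))) ≤ pA α t x y := by
  have hmono := integral_Ioi_pt_le_integral_exp_mul_pt ht
    (by nlinarith [pi_pos] : 0 ≤ -(4 * π * α)) (‖x‖ + ‖y‖)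
  simp only [neg_mul] at hmono
  have hK : 0 ≤ 8 * π * t / (‖x‖ * ‖y‖) := by positivity
  have hcoef : 8 * π * α * t / (‖x‖ * ‖y‖) = α * (8 * π * t / (‖x‖ * ‖y‖)) := by ring
  simp only [pA, zero_mul, mul_zero, zero_div, sub_zero, hcoef, add_assoc]
  nlinarith [mul_le_mul_of_nonneg_left hmono hK]

/-- As `α → −∞`, `p_t^α(x,y)` tends to `+∞`. -/
theorem pA_tendsto_atBot (t : ℝ) (ht : 0 < t)
    (x y : EuclideanSpace ℝ (Fin 3)) (hx : x ≠ 0) (hy : y ≠ 0) :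
    Tendsto (fun α : ℝ => pA α t x y) atBot atTop := by
  have hx' : 0 < ‖x‖ := norm_pos_iff.mpr hx
  have hy' : 0 < ‖y‖ := norm_pos_iff.mpr hy
  have hC : 0 < 8 * π * t / (‖x‖ * ‖y‖) * ∫ u in Set.Ioi (0 : ℝ), pt t (u + (‖x‖ + ‖y‖)) :=
    mul_pos (by positivity) (integral_Ioi_pt_pos ht _)
  refine tendsto_atTop_mono' atBot ?_
    (tendsto_atTop_add_const_left _ (pA 0 t x y) (tendsto_neg_atBot_atTop.atTop_mul_const hC))
  filter_upwards [eventually_le_atBot 0] with α hα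
  exact pA_zero_add_le_pA ht hα x y
end
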